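/- arXiv:math/0511132 — 7 statements merged into one kernel-verified Lean document; each statement's English description precedes it below -/
import Mathlib

section
/- There is a unique continuous multiplication on the Banach space ℓ¹ of absolutely summable complex sequences such that the standard basis vectors satisfy e_i * e_j = e_{min(i,j)} for all i, j ∈ ℕ; moreover this multiplication is commutative and associative and makes ℓ¹ into a Banach algebra (i.e., ‖a*b‖ ≤ ‖a‖·‖b‖). -/
open scoped ENNReal

set_option maxHeartbeats 1600000

/-- The standard basis vector `e i` in `ℓ¹(ℕ, ℂ)`. -/
noncomputable def stdBasis (i : ℕ) : lp (fun _ : ℕ => ℂ) 1 := lp.single 1 i 1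

local notation "X" => lp (fun _ : ℕ => ℂ) 1

lemma l1_norm_eq (a : X) : ‖a‖ = ∑' i, ‖a i‖ := by
  simpa using lp.norm_eq_tsum_rpow (p := 1) (by norm_num) a

lemma l1_summable_norm (a : X) : Summable fun i => ‖a i‖ := by
  have := lp.hasSum_norm (p := 1) (by norm_num) a
  simpa using this.summable

lemma norm_stdBasis (i : ℕ) : ‖stdBasis i‖ = 1 := by
  have := lp.norm_single (E := fun _ : ℕ => ℂ) (p := 1) (by norm_num) i (1 : ℂ)
  simpa [stdBasis] using this

lemma stdBasis_apply_self (i : ℕ) : (stdBasis i : ∀ _ : ℕ, ℂ) i = 1 :=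
  lp.single_apply_self 1 i 1

lemma stdBasis_apply_ne {i j : ℕ} (h : j ≠ i) : (stdBasis i : ∀ _ : ℕ, ℂ) j = 0 :=
  lp.single_apply_ne 1 i 1 h

lemma summable_F (a b : X) :
    Summable fun p : ℕ × ℕ => (a p.1 * b p.2) • stdBasis (min p.1 p.2) := by
  apply Summable.of_norm
  have : (fun p : ℕ × ℕ => ‖(a p.1 * b p.2) • stdBasis (min p.1 p.2)‖)
      = fun p : ℕ × ℕ => ‖a p.1‖ * ‖b p.2‖ := by
    funext p
    rw [norm_smul, norm_stdBasis, mul_one, norm_mul]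
  rw [this]
  exact (l1_summable_norm a).mul_of_nonneg (l1_summable_norm b)
    (fun _ => norm_nonneg _) (fun _ => norm_nonneg _)

noncomputable def Bmap : X →ₗ[ℂ] X →ₗ[ℂ] X :=
  LinearMap.mk₂ ℂ
    (fun a b => ∑' p : ℕ × ℕ, (a p.1 * b p.2) • stdBasis (min p.1 p.2))
    (fun a a' b => by
      dsimp only
      rw [← Summable.tsum_add (summable_F a b) (summable_F a' b)]
      congr 1; funext p
      simp [add_mul, add_smul])
    (fun c a b => by
      dsimp only
      rw [← ((summable_F a b).hasSum.const_smul c).tsum_eq]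
      congr 1; funext p
      simp [smul_smul, mul_assoc])
    (fun a b b' => by
      dsimp only
      rw [← Summable.tsum_add (summable_F a b) (summable_F a b')]
      congr 1; funext p
      simp [mul_add, add_smul])
    (fun c a b => by
      dsimp only
      rw [← ((summable_F a b).hasSum.const_smul c).tsum_eq]
      congr 1; funext p
      simp only [lp.coeFn_smul, Pi.smul_apply, smul_eq_mul, smul_smul]
      ring_nf)

lemma Bmap_apply (a b : X) :
    Bmap a b = ∑' p : ℕ × ℕ, (a p.1 * b p.2) • stdBasis (min p.1 p.2) := by
  rw [Bmap, LinearMap.mk₂_apply]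

lemma Bmap_bound (a b : X) : ‖Bmap a b‖ ≤ 1 * ‖a‖ * ‖b‖ := by
  rw [one_mul, Bmap_apply]
  have h1 : ‖∑' p : ℕ × ℕ, (a p.1 * b p.2) • stdBasis (min p.1 p.2)‖ ≤ ∑' p : ℕ × ℕ, ‖(a p.1 * b p.2) • stdBasis (min p.1 p.2)‖ :=
    norm_tsum_le_tsum_norm (by
      have : (fun p : ℕ × ℕ => ‖(a p.1 * b p.2) • stdBasis (min p.1 p.2)‖)
          = fun p : ℕ × ℕ => ‖a p.1‖ * ‖b p.2‖ := by
        funext p; rw [norm_smul, norm_stdBasis, mul_one, norm_mul]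
      rw [this]
      exact (l1_summable_norm a).mul_of_nonneg (l1_summable_norm b)
        (fun _ => norm_nonneg _) (fun _ => norm_nonneg _))
  refine h1.trans ?_
  have : (fun p : ℕ × ℕ => ‖(a p.1 * b p.2) • stdBasis (min p.1 p.2)‖)
      = fun p : ℕ × ℕ => ‖a p.1‖ * ‖b p.2‖ := by
    funext p; rw [norm_smul, norm_stdBasis, mul_one, norm_mul]
  rw [this, l1_norm_eq a, l1_norm_eq b,
    tsum_mul_tsum_of_summable_norm (by simpa only [norm_norm] using l1_summable_norm a)
      (by simpa only [norm_norm] using l1_summable_norm b)]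

noncomputable def M : X →L[ℂ] X →L[ℂ] X := LinearMap.mkContinuous₂ Bmap 1 Bmap_bound

lemma M_apply (a b : X) :
    M a b = ∑' p : ℕ × ℕ, (a p.1 * b p.2) • stdBasis (min p.1 p.2) := by
  rw [M, LinearMap.mkContinuous₂_apply, Bmap_apply]

lemma M_basis (i j : ℕ) : M (stdBasis i) (stdBasis j) = stdBasis (min i j) := by
  rw [M_apply]
  rw [tsum_eq_single (i, j)]
  · simp [stdBasis_apply_self]
  · rintro ⟨k, l⟩ hp
    rcases ne_or_eq k i with hk | rfl
    · simp [stdBasis_apply_ne hk]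
    rcases ne_or_eq l j with hl | rfl
    · simp [stdBasis_apply_ne hl]
    exact absurd rfl hp

lemma ext_single {Y : Type*} [NormedAddCommGroup Y] [NormedSpace ℂ Y]
    {f g : X →L[ℂ] Y} (h : ∀ i, f (stdBasis i) = g (stdBasis i)) : f = g := by
  ext a
  haveI : Fact ((1 : ℝ≥0∞) ≤ 1) := ⟨le_refl _⟩
  have hs := lp.hasSum_single (E := fun _ : ℕ => ℂ) (p := 1) (by norm_num) a
  have h1 : ∀ i, lp.single (E := fun _ : ℕ => ℂ) 1 i (a i) = (a i) • stdBasis i := by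
    intro i
    rw [stdBasis, ← lp.single_smul]
    simp [smul_eq_mul]
  have hf : HasSum (fun i => (a i) • f (stdBasis i)) (f a) := by
    have := f.hasSum hs
    simpa [h1] using this
  have hg : HasSum (fun i => (a i) • g (stdBasis i)) (g a) := by
    have := g.hasSum hs
    simpa [h1] using this
  refine hf.unique ?_
  simpa [h] using hg

/-- There is a unique continuous (bilinear) multiplication on `ℓ¹` such that
`e i * e j = e (min i j)`; it is commutative, associative, and submultiplicative. -/
theorem stmt0 :
    ∃ m : lp (fun _ : ℕ => ℂ) 1 →L[ℂ] lp (fun _ : ℕ => ℂ) 1 →L[ℂ] lp (fun _ : ℕ => ℂ) 1,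
      (∀ i j : ℕ, m (stdBasis i) (stdBasis j) = stdBasis (min i j)) ∧
      (∀ a b, m a b = m b a) ∧
      (∀ a b c, m (m a b) c = m a (m b c)) ∧
      (∀ a b, ‖m a b‖ ≤ ‖a‖ * ‖b‖) ∧
      (∀ m' : lp (fun _ : ℕ => ℂ) 1 →L[ℂ] lp (fun _ : ℕ => ℂ) 1 →L[ℂ] lp (fun _ : ℕ => ℂ) 1,
        (∀ i j : ℕ, m' (stdBasis i) (stdBasis j) = stdBasis (min i j)) → m' = m) := by
  refine ⟨M, M_basis, ?_, ?_, ?_, ?_⟩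
  · -- commutativity
    have h : M.flip = M := by
      apply ext_single; intro i
      apply ext_single; intro j
      rw [ContinuousLinearMap.flip_apply, M_basis, M_basis, min_comm]
    intro a b
    have h1 : M.flip b a = M b a := by rw [h]
    rw [← h1, ContinuousLinearMap.flip_apply]
  · -- associativity
    have hB : ∀ i j : ℕ, M (stdBasis (min i j)) = (M (stdBasis i)).comp (M (stdBasis j)) := by
      intro i j
      apply ext_single; intro k
      rw [ContinuousLinearMap.comp_apply, M_basis, M_basis, M_basis, min_assoc]
    have hC : ∀ (i : ℕ) (c : lp (fun _ : ℕ => ℂ) 1),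
        (M.flip c).comp (M (stdBasis i)) = (M (stdBasis i)).comp (M.flip c) := by
      intro i c
      apply ext_single; intro j
      simp only [ContinuousLinearMap.comp_apply, ContinuousLinearMap.flip_apply, M_basis]
      exact (DFunLike.congr_fun (hB i j) c).trans (by rw [ContinuousLinearMap.comp_apply])
    intro a b c
    have hE : (M.flip c).comp (M.flip b) = M.flip (M b c) := by
      apply ext_single; intro i
      simp only [ContinuousLinearMap.comp_apply, ContinuousLinearMap.flip_apply]
      have := DFunLike.congr_fun (hC i c) b
      simpa only [ContinuousLinearMap.comp_apply, ContinuousLinearMap.flip_apply] using this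
    have := DFunLike.congr_fun hE a
    simpa only [ContinuousLinearMap.comp_apply, ContinuousLinearMap.flip_apply] using this
  · -- norm bound
    intro a b
    calc ‖M a b‖ = ‖Bmap a b‖ := by rw [M_apply, Bmap_apply]
    _ ≤ 1 * ‖a‖ * ‖b‖ := Bmap_bound a b
    _ = ‖a‖ * ‖b‖ := by rw [one_mul]
  · -- uniqueness
    intro m' hm'
    apply ext_single; intro i
    apply ext_single; intro j
    rw [hm' i j, M_basis]
end

section
/- Let A₁ be ℓ¹ equipped with the multiplication determined by e_i * e_j = e_{min(i,j)}. Then the map sending e_n to e_1 + e_2 + ⋯ + e_n extends to a topological algebra isomorphism from A₁ onto the sequence algebra bv₀ (sequences converging to 0 with bounded variation, under pointwise multiplication). -/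
set_option maxHeartbeats 1000000


open scoped ENNReal
open Filter

/-- The set `bv₀` of complex sequences tending to `0` and of bounded variation. -/
def bv0 : Set (ℕ → ℂ) :=
  {x | Tendsto x atTop (nhds 0) ∧ Summable (fun n => ‖x (n + 1) - x n‖)}

/-- The `bv`-norm of a sequence: total variation plus sup norm. -/
noncomputable def bvNorm (x : ℕ → ℂ) : ℝ :=
  (∑' n, ‖x (n + 1) - x n‖) + ⨆ n, ‖x n‖

namespace Stmt1Aux

noncomputable abbrev L := lp (fun _ : ℕ => ℂ) 1

lemma summable_norm (a : L) : Summable fun n => ‖a n‖ := by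
  have h := lp.memℓp a
  rw [memℓp_gen_iff (by norm_num : 0 < (1 : ℝ≥0∞).toReal)] at h
  simpa using h

lemma summable_coe (a : L) : Summable fun n => a n :=
  (summable_norm a).of_norm

lemma norm_eq_tsum (a : L) : ‖a‖ = ∑' n, ‖a n‖ := by
  have h := lp.norm_eq_tsum_rpow (by norm_num : 0 < (1 : ℝ≥0∞).toReal) a
  simpa using h

lemma summable_shift (a : L) (k : ℕ) : Summable fun n => a (n + k) :=
  (summable_nat_add_iff k).2 (summable_coe a)

lemma summable_norm_shift (a : L) (k : ℕ) : Summable fun n => ‖a (n + k)‖ :=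
  (summable_nat_add_iff k).2 (summable_norm a)

lemma tail_norm_le (a : L) (k : ℕ) : ∑' n, ‖a (n + k)‖ ≤ ‖a‖ := by
  have h := Summable.sum_add_tsum_nat_add' (f := fun n => ‖a n‖) (k := k) (summable_norm_shift a k)
  have h0 : (0 : ℝ) ≤ ∑ i ∈ Finset.range k, ‖a i‖ :=
    Finset.sum_nonneg fun _ _ => norm_nonneg _
  rw [norm_eq_tsum]
  linarith

/-- The `k`-th tail-sum functional. -/
noncomputable def Tk (k : ℕ) : L →L[ℂ] ℂ :=
  LinearMap.mkContinuous
    { toFun := fun a => ∑' n, a (n + k)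
      map_add' := fun a b => by
        simp only [lp.coeFn_add, Pi.add_apply]
        exact Summable.tsum_add (summable_shift a k) (summable_shift b k)
      map_smul' := fun c a => by
        simp only [lp.coeFn_smul, Pi.smul_apply, smul_eq_mul, RingHom.id_apply]
        exact (summable_shift a k).tsum_mul_left c }
    1
    (fun a => by
      simp only [LinearMap.coe_mk, AddHom.coe_mk, one_mul]
      exact le_trans (norm_tsum_le_tsum_norm (summable_norm_shift a k)) (tail_norm_le a k))

lemma Tk_apply (k : ℕ) (a : L) : Tk k a = ∑' n, a (n + k) := rfl

lemma Tk_norm_le (k : ℕ) (a : L) : ‖Tk k a‖ ≤ ‖a‖ :=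
  le_trans (norm_tsum_le_tsum_norm (summable_norm_shift a k)) (tail_norm_le a k)

lemma Tk_single (k n : ℕ) : Tk k (stdBasis n) = if k ≤ n then 1 else 0 := by
  rw [Tk_apply]
  by_cases h : k ≤ n
  · rw [if_pos h, tsum_eq_single (n - k)]
    · show (stdBasis n : ℕ → ℂ) (n - k + k) = 1
      have hnk : n - k + k = n := by omega
      rw [stdBasis, hnk]
      exact lp.single_apply_self 1 n 1
    · intro j hj
      exact lp.single_apply_ne 1 n 1 (j := j + k) (by omega)
  · rw [if_neg h]
    have : ∀ j : ℕ, (stdBasis n : ℕ → ℂ) (j + k) = 0 := fun j =>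
      lp.single_apply_ne 1 n 1 (j := j + k) (by omega)
    simp only [this, tsum_zero]

lemma Tk_succ (a : L) (k : ℕ) : Tk k a = a k + Tk (k + 1) a := by
  rw [Tk_apply, Tk_apply]
  rw [tsum_eq_zero_add' ((summable_nat_add_iff 1).2 (summable_shift a k))]
  simp only [zero_add]
  congr 1
  refine tsum_congr fun n => ?_
  have h : n + 1 + k = n + (k + 1) := by omega
  rw [h]

/-- The tail-sum map as a linear map into sequences. -/
noncomputable def T : L →ₗ[ℂ] (ℕ → ℂ) where
  toFun := fun a k => Tk k a
  map_add' := fun a b => funext fun k => (Tk k).map_add a b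
  map_smul' := fun c a => funext fun k => (Tk k).map_smul c a

lemma T_apply (a : L) (k : ℕ) : T a k = Tk k a := rfl

lemma T_single (n : ℕ) : T (stdBasis n) = fun k => if k ≤ n then 1 else 0 :=
  funext fun k => Tk_single k n

lemma T_inj : Function.Injective T := by
  intro a b hab
  apply lp.ext
  funext k
  have e1 : Tk k a = Tk k b := congrFun hab k
  have e2 : Tk (k + 1) a = Tk (k + 1) b := congrFun hab (k + 1)
  have h1 := Tk_succ a k
  have h2 := Tk_succ b k
  show a k = b k
  linear_combination -h1 + h2 + e1 - e2

lemma T_mem_bv0 (a : L) : T a ∈ bv0 := by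
  constructor
  · show Tendsto (fun k => Tk k a) atTop (nhds 0)
    have h := tendsto_sum_nat_add (fun n => (a : ℕ → ℂ) n)
    exact h
  · have h : ∀ n : ℕ, ‖T a (n + 1) - T a n‖ = ‖a n‖ := by
      intro n
      rw [T_apply, T_apply, Tk_succ a n]
      simp [norm_sub_rev]
    simp only [h]
    exact summable_norm a

lemma dense_span : Dense ((Submodule.span ℂ (Set.range stdBasis) : Submodule ℂ L) : Set L) := by
  intro a
  have h := lp.hasSum_single (E := fun _ : ℕ => ℂ) (p := 1) (by norm_num) a
  refine mem_closure_of_tendsto h (Eventually.of_forall fun s => ?_)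
  refine Submodule.sum_mem _ fun i _ => ?_
  have : lp.single (E := fun _ : ℕ => ℂ) 1 i (a i) = a i • stdBasis i := by
    apply lp.ext
    funext j
    simp only [stdBasis, lp.coeFn_smul, Pi.smul_apply, smul_eq_mul]
    by_cases hj : j = i
    · subst hj
      rw [lp.single_apply_self, lp.single_apply_self, mul_one]
    · rw [lp.single_apply_ne 1 i _ hj, lp.single_apply_ne 1 i _ hj, mul_zero]
  rw [this]
  exact Submodule.smul_mem _ _ (Submodule.subset_span (Set.mem_range_self i))

lemma sup_nonneg (a : L) : 0 ≤ ⨆ n, ‖T a n‖ :=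
  Real.iSup_nonneg fun n => norm_nonneg _

lemma sup_le_norm (a : L) : (⨆ n, ‖T a n‖) ≤ ‖a‖ :=
  Real.iSup_le (fun n => Tk_norm_le n a) (norm_nonneg a)

lemma var_eq (a : L) : (∑' n, ‖T a (n + 1) - T a n‖) = ‖a‖ := by
  have h : ∀ n : ℕ, ‖T a (n + 1) - T a n‖ = ‖a n‖ := by
    intro n
    rw [T_apply, T_apply, Tk_succ a n]
    simp [norm_sub_rev]
  rw [tsum_congr h, norm_eq_tsum]

end Stmt1Aux

open Stmt1Aux in
/-- The map `e n ↦ e 0 + e 1 + ⋯ + e n` extends to a topological algebra isomorphism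
from `A₁` (that is, `ℓ¹` with the multiplication `m` determined by
`e i * e j = e (min i j)`) onto the sequence algebra `bv₀` with its pointwise
multiplication. -/
theorem stmt1
    (m : lp (fun _ : ℕ => ℂ) 1 →L[ℂ] lp (fun _ : ℕ => ℂ) 1 →L[ℂ] lp (fun _ : ℕ => ℂ) 1)
    (hm : ∀ i j : ℕ, m (stdBasis i) (stdBasis j) = stdBasis (min i j))
    (hbound : ∀ a b, ‖m a b‖ ≤ ‖a‖ * ‖b‖) :
    ∃ T : lp (fun _ : ℕ => ℂ) 1 →ₗ[ℂ] (ℕ → ℂ),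
      (∀ n : ℕ, T (stdBasis n) = fun k => if k ≤ n then 1 else 0) ∧
      Function.Injective T ∧
      Set.range T = bv0 ∧
      (∀ a b, T (m a b) = T a * T b) ∧
      (∃ c > (0 : ℝ), ∃ C > (0 : ℝ), ∀ a,
        c * ‖a‖ ≤ bvNorm (T a) ∧ bvNorm (T a) ≤ C * ‖a‖) := by
  refine ⟨Stmt1Aux.T, T_single, T_inj, ?_, ?_, ?_⟩
  · -- range
    apply Set.Subset.antisymm
    · rintro _ ⟨a, rfl⟩
      exact T_mem_bv0 a
    · rintro x ⟨hx0, hxs⟩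
      have hswap : Summable fun n => ‖x n - x (n + 1)‖ :=
        hxs.congr fun n => norm_sub_rev _ _
      have hb : Memℓp (fun n => x n - x (n + 1)) 1 := by
        apply memℓp_gen
        simpa using hswap
      refine ⟨⟨_, hb⟩, ?_⟩
      funext k
      show Tk k (⟨_, hb⟩ : L) = x k
      rw [Tk_apply]
      have hs : Summable fun n => x (n + k) - x (n + k + 1) :=
        (summable_nat_add_iff k).2 hswap.of_norm
      have h1 : Tendsto (fun N => ∑ n ∈ Finset.range N, (x (n + k) - x (n + k + 1)))
          atTop (nhds (∑' n, (x (n + k) - x (n + k + 1)))) :=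
        hs.hasSum.tendsto_sum_nat
      have hpart : ∀ N, ∑ n ∈ Finset.range N, (x (n + k) - x (n + k + 1))
          = x k - x (N + k) := by
        intro N
        calc ∑ n ∈ Finset.range N, (x (n + k) - x (n + k + 1))
            = ∑ n ∈ Finset.range N, (x (n + k) - x ((n + 1) + k)) := by
              refine Finset.sum_congr rfl fun n _ => ?_
              congr 2
              omega
          _ = x (0 + k) - x (N + k) := Finset.sum_range_sub' (fun n => x (n + k)) N
          _ = x k - x (N + k) := by rw [Nat.zero_add]
      have h2 : Tendsto (fun N => x k - x (N + k)) atTop (nhds (x k)) := by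
        have hx' : Tendsto (fun N : ℕ => x (N + k)) atTop (nhds 0) :=
          hx0.comp (tendsto_add_atTop_nat k)
        simpa using tendsto_const_nhds.sub hx'
      have := tendsto_nhds_unique (h1.congr (fun N => hpart N)) h2
      exact this
  · -- multiplicative
    have key : ∀ (k : ℕ) (a b : L), Tk k (m a b) = Tk k a * Tk k b := by
      have step1 : ∀ (k i : ℕ) (b : L),
          Tk k (m (stdBasis i) b) = Tk k (stdBasis i) * Tk k b := by
        intro k i
        have heq : (Tk k).comp (m (stdBasis i)) = Tk k (stdBasis i) • Tk k := by
          apply ContinuousLinearMap.ext_on dense_span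
          rintro _ ⟨j, rfl⟩
          simp only [ContinuousLinearMap.comp_apply, ContinuousLinearMap.smul_apply,
            smul_eq_mul, hm, Tk_single]
          by_cases h1 : k ≤ i <;> by_cases h2 : k ≤ j <;>
            simp [le_min_iff, h1, h2]
        intro b
        have := DFunLike.congr_fun heq b
        simpa using this
      intro k a b
      have heq : (Tk k).comp (m.flip b) = Tk k b • Tk k := by
        apply ContinuousLinearMap.ext_on dense_span
        rintro _ ⟨i, rfl⟩
        simp only [ContinuousLinearMap.comp_apply, ContinuousLinearMap.flip_apply,
          ContinuousLinearMap.smul_apply, smul_eq_mul]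
        rw [step1 k i b]
        ring
      have := DFunLike.congr_fun heq a
      simpa using this.trans (mul_comm _ _)
    intro a b
    funext k
    exact key k a b
  · -- norm equivalence
    refine ⟨1, one_pos, 2, two_pos, fun a => ?_⟩
    have hv := var_eq a
    have hs := sup_le_norm a
    have hs0 := sup_nonneg a
    unfold bvNorm
    constructor
    · rw [hv]; linarith
    · rw [hv]; linarith
end

section
/- In the Banach algebra A₁ (ℓ¹ with multiplication e_i * e_j = e_{min(i,j)}), the sequence (e_n)_{n∈ℕ} is a bounded approximate identity: ‖e_n‖ = 1 for all n, and for every a ∈ A₁, a * e_n → a in norm as n → ∞. -/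
open scoped ENNReal
open Filter

lemma stdBasis_norm (n : ℕ) : ‖stdBasis n‖ = 1 := by
  have hp : (0:ℝ) < (1:ℝ≥0∞).toReal := by norm_num
  have := lp.norm_single (E := fun _ : ℕ => ℂ) (p := 1) (by norm_num) n (1:ℂ)
  simpa [stdBasis] using this

/-- In the Banach algebra `A₁` (`ℓ¹` with multiplication `e i * e j = e (min i j)`),
the sequence `(e n)` is a bounded approximate identity: `‖e n‖ = 1` for all `n` and
`a * e n → a` in norm for every `a`. -/
theorem stmt2
    (m : lp (fun _ : ℕ => ℂ) 1 →L[ℂ] lp (fun _ : ℕ => ℂ) 1 →L[ℂ] lp (fun _ : ℕ => ℂ) 1)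
    (hm : ∀ i j : ℕ, m (stdBasis i) (stdBasis j) = stdBasis (min i j))
    (hbound : ∀ a b, ‖m a b‖ ≤ ‖a‖ * ‖b‖) :
    (∀ n : ℕ, ‖stdBasis n‖ = 1) ∧
    (∀ a : lp (fun _ : ℕ => ℂ) 1,
      Tendsto (fun n : ℕ => m a (stdBasis n)) atTop (nhds a)) := by
  refine ⟨stdBasis_norm, fun a => ?_⟩
  -- partial sums
  set s : ℕ → lp (fun _ : ℕ => ℂ) 1 :=
    fun n => ∑ i ∈ Finset.range (n+1), lp.single 1 i (a i) with hs
  have hsingle : ∀ i : ℕ, lp.single (E := fun _ : ℕ => ℂ) 1 i (a i) = a i • stdBasis i := by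
    intro i
    have := lp.single_smul (E := fun _ : ℕ => ℂ) 1 i (a i) (1:ℂ)
    simpa [stdBasis] using this
  -- s n → a
  have hsum : HasSum (fun i : ℕ => lp.single (E := fun _ : ℕ => ℂ) 1 i (a i)) a :=
    lp.hasSum_single (by norm_num) a
  have hst : Tendsto s atTop (nhds a) :=
    (hsum.tendsto_sum_nat).comp (tendsto_add_atTop_nat 1)
  -- m (s n) (e n) = s n
  have hfix : ∀ n : ℕ, m (s n) (stdBasis n) = s n := by
    intro n
    rw [hs]
    simp only [map_sum, ContinuousLinearMap.coe_sum', Finset.sum_apply]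
    refine Finset.sum_congr rfl fun i hi => ?_
    have hin : i ≤ n := Nat.lt_succ_iff.mp (Finset.mem_range.mp hi)
    rw [hsingle i]
    simp only [map_smul, ContinuousLinearMap.smul_apply]
    rw [hm i n, min_eq_left hin]
  -- bound
  have hb : ∀ n : ℕ, ‖m a (stdBasis n) - a‖ ≤ 2 * ‖s n - a‖ := by
    intro n
    have h1 : m a (stdBasis n) - a = m (a - s n) (stdBasis n) + (s n - a) := by
      rw [map_sub]
      simp only [ContinuousLinearMap.sub_apply, hfix n]
      abel
    rw [h1]
    calc ‖m (a - s n) (stdBasis n) + (s n - a)‖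
        ≤ ‖m (a - s n) (stdBasis n)‖ + ‖s n - a‖ := norm_add_le _ _
      _ ≤ ‖a - s n‖ * ‖stdBasis n‖ + ‖s n - a‖ := by gcongr; exact hbound _ _
      _ = 2 * ‖s n - a‖ := by rw [stdBasis_norm, norm_sub_rev]; ring
  rw [tendsto_iff_norm_sub_tendsto_zero]
  have h0 : Tendsto (fun n => 2 * ‖s n - a‖) atTop (nhds 0) := by
    have := (tendsto_iff_norm_sub_tendsto_zero.mp hst).const_mul 2
    simpa using this
  exact squeeze_zero (fun n => norm_nonneg _) hb h0
end

section
/- The property of having a right locally bounded approximate identity does not depend on the choice of the directed generating family of seminorms: if {‖·‖_λ : λ ∈ Λ} and {|·|_μ : μ ∈ M} are two directed families of continuous seminorms on a locally convex algebra A each generating its topology, then A has a right locally bounded a.i. with respect to the first family if and only if it has one with respect to the second. -/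
open Filter

/-- `A` has a right approximate identity: a net `(e_i)` with `a * e_i → a` for all `a`. -/
def HasRightAI (A : Type*) [NonUnitalRing A] [TopologicalSpace A] : Prop :=
  ∃ (ι : Type) (pr : Preorder ι),
    (∀ x y : ι, ∃ z, pr.le x z ∧ pr.le y z) ∧ Nonempty ι ∧
    ∃ e : ι → A, ∀ a : A, Tendsto (fun i => a * e i) (@Filter.atTop ι pr) (nhds a)

/-- `A` has a right bounded approximate identity: a bounded net `(e_i)` with
`a * e_i → a` for all `a`. -/
def HasRightBAI (A : Type*) [NonUnitalRing A] [Module ℂ A] [TopologicalSpace A] : Prop :=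
  ∃ (ι : Type) (pr : Preorder ι),
    (∀ x y : ι, ∃ z, pr.le x z ∧ pr.le y z) ∧ Nonempty ι ∧
    ∃ e : ι → A, Bornology.IsVonNBounded ℂ (Set.range e) ∧
      ∀ a : A, Tendsto (fun i => a * e i) (@Filter.atTop ι pr) (nhds a)

/-- `A` has a right locally bounded approximate identity with respect to the seminorm
family `q`. -/
def HasRightLBAI {A Λ : Type*} [NonUnitalRing A] [Module ℂ A]
    (q : SeminormFamily ℂ A Λ) : Prop :=
  ∃ C : Λ → ℝ, (∀ lam, 0 < C lam) ∧
    ∀ (F : Finset A) (lam : Λ) (ε : ℝ), 0 < ε →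
      ∃ b : A, (∀ a ∈ F, q lam (a - a * b) < ε) ∧ q lam b ≤ C lam

open scoped NNReal

theorem WithSeminorms.exists_le_smul_of_directed {𝕜 E ι : Type*} [NontriviallyNormedField 𝕜]
    [AddCommGroup E] [Module 𝕜 E] [TopologicalSpace E] [Nonempty ι] {p : SeminormFamily 𝕜 E ι}
    (hp : WithSeminorms p) (hdir : Directed (· ≤ ·) p) (r : Seminorm 𝕜 E) (hr : Continuous r) :
    ∃ i, ∃ c : ℝ≥0, 0 < c ∧ r ≤ c • p i := by
  obtain ⟨s, c, hc, hr_le⟩ := Seminorm.bound_of_continuous hp r hr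
  obtain ⟨i, hi⟩ := hdir.finset_le s
  exact ⟨i, c, pos_iff_ne_zero.mpr hc, hr_le.trans (IsOrderedSMul.smul_le_smul_left _ _
    (Finset.sup_le hi) c)⟩

theorem HasRightLBAI.of_forall_le_smul {A Λ M : Type*} [NonUnitalRing A] [Module ℂ A]
    {q : SeminormFamily ℂ A Λ} {q' : SeminormFamily ℂ A M} (h : HasRightLBAI q)
    (hle : ∀ μ, ∃ lam, ∃ c : ℝ≥0, 0 < c ∧ q' μ ≤ c • q lam) : HasRightLBAI q' := by
  obtain ⟨C, hC_pos, hC⟩ := h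
  choose lam c hc_pos hc using hle
  refine ⟨fun μ => c μ * C (lam μ), fun μ => mul_pos (hc_pos μ) (hC_pos _), ?_⟩
  intro F μ ε hε
  have hc_pos' : (0 : ℝ) < c μ := hc_pos μ
  obtain ⟨b, hb_approx, hb_bound⟩ := hC F (lam μ) (ε / c μ) (div_pos hε hc_pos')
  refine ⟨b, fun a ha => ?_, ?_⟩
  · calc q' μ (a - a * b) ≤ c μ * q (lam μ) (a - a * b) := hc μ _
      _ < c μ * (ε / c μ) := by gcongr; exact hb_approx a ha
      _ = ε := mul_div_cancel₀ ε hc_pos'.ne'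
  · calc q' μ b ≤ c μ * q (lam μ) b := hc μ b
      _ ≤ c μ * C (lam μ) := by gcongr

theorem stmt6_general {A Λ M : Type*} [NonUnitalRing A] [Module ℂ A] [TopologicalSpace A]
    [Nonempty Λ] [Nonempty M]
    (q : SeminormFamily ℂ A Λ) (hq : WithSeminorms q) (hqdir : Directed (· ≤ ·) q)
    (q' : SeminormFamily ℂ A M) (hq' : WithSeminorms q') (hq'dir : Directed (· ≤ ·) q') :
    HasRightLBAI q ↔ HasRightLBAI q' :=
  ⟨fun h => h.of_forall_le_smul fun μ =>
      hq.exists_le_smul_of_directed hqdir (q' μ) (hq'.continuous_seminorm μ),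
    fun h => h.of_forall_le_smul fun lam =>
      hq'.exists_le_smul_of_directed hq'dir (q lam) (hq.continuous_seminorm lam)⟩

/-- Having a right locally bounded approximate identity does not depend on the choice of
the directed generating family of seminorms. -/
theorem stmt6 {A Λ M : Type*} [NonUnitalRing A] [Module ℂ A] [TopologicalSpace A]
    [Nonempty Λ] [Nonempty M]
    (q : SeminormFamily ℂ A Λ) (hq : WithSeminorms q) (hqdir : Directed (· ≤ ·) q)
    (q' : SeminormFamily ℂ A M) (hq' : WithSeminorms q') (hq'dir : Directed (· ≤ ·) q')
    (hmul : Continuous fun ab : A × A => ab.1 * ab.2) :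
    HasRightLBAI q ↔ HasRightLBAI q' :=
  stmt6_general q hq hqdir q' hq' hq'dir
end

section
/- Let P be a directed family of sequences p with p_i ≥ 1, and let A(P) be the Köthe algebra λ(P) with multiplication e_i e_j = e_{min(i,j)}. If every sequence p ∈ P has a bounded subsequence, then A(P) has a (right) locally bounded approximate identity. -/
/-- The Köthe sequence space `λ(P)` as a subspace of `ℕ → ℂ`. -/
noncomputable def kothe (P : Set (ℕ → ℝ)) (hP : ∀ p ∈ P, ∀ i, (1 : ℝ) ≤ p i) :
    Submodule ℂ (ℕ → ℂ) where
  carrier := {a | ∀ p ∈ P, Summable fun i => ‖a i‖ * p i}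
  zero_mem' := by intro p hp; simpa using summable_zero
  add_mem' := by
    intro a b ha hb p hp
    refine Summable.of_nonneg_of_le
      (fun i => mul_nonneg (norm_nonneg _)
        (le_trans zero_le_one (hP p hp i))) (fun i => ?_) ((ha p hp).add (hb p hp))
    have := mul_le_mul_of_nonneg_right (norm_add_le ((a : ℕ → ℂ) i) (b i))
      (le_trans zero_le_one (hP p hp i))
    simpa [add_mul] using this
  smul_mem' := by
    intro c a ha p hp
    have := (ha p hp).mul_left ‖c‖
    refine this.congr fun i => ?_
    simp [norm_smul, mul_assoc]

/-- The `i`-th standard unit vector as an element of `λ(P)`. -/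
noncomputable def kotheE (P : Set (ℕ → ℝ)) (hP : ∀ p ∈ P, ∀ i, (1 : ℝ) ≤ p i)
    (i : ℕ) : kothe P hP :=
  ⟨Pi.single i 1, by
    intro p hp
    refine summable_of_ne_finset_zero (s := {i}) fun j hj => ?_
    rw [Pi.single_eq_of_ne (by simpa using hj)]
    simp⟩

/-- The seminorm `‖a‖_p = ∑ᵢ |aᵢ| pᵢ` (as a real-valued expression). -/
noncomputable def kNorm (p : ℕ → ℝ) (a : ℕ → ℂ) : ℝ := ∑' i, ‖a i‖ * p i

/-!
Take `b = e_n`, where `n` runs along a subsequence on which `p` stays below a constant `C p`;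
then `‖b‖_p = p n ≤ C p`. If `T` is the truncation of `a` to the first `N ≤ n` coordinates,
then `T b = T` because `e_i e_n = e_i` for `i ≤ n`, so `a - a b = R - R b` with `R = a - T`,
and `‖R - R b‖_p ≤ ‖R‖_p (1 + C p)`, where `‖R‖_p` is a tail of the series for `‖a‖_p`,
small for `N` large uniformly over the finite set `F`.
-/

open Filter

lemma kNorm_nonneg {p : ℕ → ℝ} (hp : ∀ i, 0 ≤ p i) (a : ℕ → ℂ) : 0 ≤ kNorm p a :=
  tsum_nonneg fun i => mul_nonneg (norm_nonneg _) (hp i)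

lemma kNorm_sub_le {p : ℕ → ℝ} (hp : ∀ i, 0 ≤ p i) {a b : ℕ → ℂ}
    (ha : Summable fun i => ‖a i‖ * p i) (hb : Summable fun i => ‖b i‖ * p i) :
    kNorm p (a - b) ≤ kNorm p a + kNorm p b := by
  have hle : ∀ i, ‖(a - b) i‖ * p i ≤ ‖a i‖ * p i + ‖b i‖ * p i := fun i => by
    rw [← add_mul]
    exact mul_le_mul_of_nonneg_right (norm_sub_le (a i) (b i)) (hp i)
  have hab := ha.add hb
  calc kNorm p (a - b) ≤ ∑' i, (‖a i‖ * p i + ‖b i‖ * p i) :=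
        (hab.of_nonneg_of_le (fun i => mul_nonneg (norm_nonneg _) (hp i)) hle).tsum_le_tsum hle hab
    _ = kNorm p a + kNorm p b := ha.tsum_add hb

section Kothe

variable {P : Set (ℕ → ℝ)} {hP : ∀ p ∈ P, ∀ i, (1 : ℝ) ≤ p i}

lemma kNorm_kotheE (p : ℕ → ℝ) (n : ℕ) : kNorm p (kotheE P hP n : ℕ → ℂ) = p n := by
  change ∑' i, ‖(Pi.single n 1 : ℕ → ℂ) i‖ * p i = p n
  rw [tsum_eq_single n fun j hj => by simp [Pi.single_eq_of_ne hj]]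
  simp

noncomputable def kotheTrunc (a : kothe P hP) (N : ℕ) : kothe P hP :=
  ∑ i ∈ Finset.range N, (a : ℕ → ℂ) i • kotheE P hP i

lemma coe_kotheTrunc_apply (a : kothe P hP) (N j : ℕ) :
    (kotheTrunc a N : ℕ → ℂ) j = if j < N then (a : ℕ → ℂ) j else 0 := by
  simp [kotheTrunc, kotheE, Pi.single_apply, Finset.sum_apply]

lemma kNorm_sub_kotheTrunc {p : ℕ → ℝ} (hp : p ∈ P) (a : kothe P hP) (N : ℕ) :
    kNorm p (a - kotheTrunc a N : kothe P hP) =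
      ∑' i, ‖(a : ℕ → ℂ) (i + N)‖ * p (i + N) := by
  have hhead : ∑ i ∈ Finset.range N,
      ‖((a - kotheTrunc a N : kothe P hP) : ℕ → ℂ) i‖ * p i = 0 :=
    Finset.sum_eq_zero fun i hi => by simp [coe_kotheTrunc_apply, Finset.mem_range.mp hi]
  rw [kNorm, ← ((a - kotheTrunc a N).2 p hp).sum_add_tsum_nat_add N, hhead, zero_add]
  exact tsum_congr fun i => by simp [coe_kotheTrunc_apply]

lemma kotheTrunc_mul_kotheE {M : kothe P hP →ₗ[ℂ] kothe P hP →ₗ[ℂ] kothe P hP}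
    (hMe : ∀ i j : ℕ, M (kotheE P hP i) (kotheE P hP j) = kotheE P hP (min i j))
    (a : kothe P hP) {N n : ℕ} (hNn : N ≤ n) :
    M (kotheTrunc a N) (kotheE P hP n) = kotheTrunc a N := by
  simp only [kotheTrunc, map_sum, map_smul, LinearMap.coe_sum, Finset.sum_apply,
    LinearMap.smul_apply, hMe]
  exact Finset.sum_congr rfl fun i hi => by
    rw [min_eq_left ((Finset.mem_range.mp hi).le.trans hNn)]

lemma kNorm_sub_mul_le {p : ℕ → ℝ} (hp : p ∈ P)
    {M : kothe P hP →ₗ[ℂ] kothe P hP →ₗ[ℂ] kothe P hP} {x b : kothe P hP}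
    (hM : kNorm p (M x b : ℕ → ℂ) ≤ kNorm p (x : ℕ → ℂ) * kNorm p (b : ℕ → ℂ)) :
    kNorm p (x - M x b : kothe P hP) ≤
      kNorm p (x : ℕ → ℂ) * (1 + kNorm p (b : ℕ → ℂ)) := by
  have hp0 (i : ℕ) : 0 ≤ p i := zero_le_one.trans (hP p hp i)
  calc kNorm p (x - M x b : kothe P hP)
      ≤ kNorm p (x : ℕ → ℂ) + kNorm p (M x b : ℕ → ℂ) :=
        kNorm_sub_le hp0 (x.2 p hp) ((M x b).2 p hp)
    _ ≤ kNorm p (x : ℕ → ℂ) * (1 + kNorm p (b : ℕ → ℂ)) := by linarith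

end Kothe

theorem stmt12_general (P : Set (ℕ → ℝ)) (hP : ∀ p ∈ P, ∀ i, (1 : ℝ) ≤ p i)
    (M : kothe P hP →ₗ[ℂ] kothe P hP →ₗ[ℂ] kothe P hP)
    (hMe : ∀ i j : ℕ, M (kotheE P hP i) (kotheE P hP j) = kotheE P hP (min i j))
    (hMsub : ∀ p ∈ P, ∀ a b : kothe P hP,
      kNorm p (M a b : ℕ → ℂ) ≤ kNorm p (a : ℕ → ℂ) * kNorm p (b : ℕ → ℂ))
    (hbdd : ∀ p ∈ P, ∃ s : ℕ → ℕ, StrictMono s ∧ ∃ C : ℝ, ∀ m, p (s m) ≤ C) :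
    ∃ C : (ℕ → ℝ) → ℝ, (∀ p ∈ P, 0 < C p) ∧
      ∀ (F : Finset (kothe P hP)), ∀ p ∈ P, ∀ ε : ℝ, 0 < ε →
        ∃ b : kothe P hP,
          (∀ a ∈ F, kNorm p ((a - M a b : kothe P hP) : ℕ → ℂ) < ε) ∧
          kNorm p (b : ℕ → ℂ) ≤ C p := by
  choose! s hs C hC using hbdd
  refine ⟨C, fun p hp => one_pos.trans_le ((hP p hp _).trans (hC p hp 0)), ?_⟩
  intro F p hp ε hε
  have hsmall : ∀ᶠ N in atTop, ∀ a ∈ F,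
      (∑' i, ‖(a : ℕ → ℂ) (i + N)‖ * p (i + N)) * (1 + C p) < ε :=
    (eventually_all_finset F).2 fun a _ => by
      simpa using ((tendsto_sum_nat_add fun i => ‖(a : ℕ → ℂ) i‖ * p i).mul_const
        (1 + C p)).eventually_lt_const (by simpa using hε)
  obtain ⟨N, hN⟩ := hsmall.exists
  set b := kotheE P hP (s p N)
  have hb : kNorm p (b : ℕ → ℂ) ≤ C p := (kNorm_kotheE p _).trans_le (hC p hp N)
  refine ⟨b, fun a ha => ?_, hb⟩
  have hsplit : a - M a b = (a - kotheTrunc a N) - M (a - kotheTrunc a N) b := by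
    rw [map_sub, LinearMap.sub_apply, kotheTrunc_mul_kotheE hMe a (hs p hp).le_apply]; abel
  calc kNorm p ((a - M a b : kothe P hP) : ℕ → ℂ)
      ≤ kNorm p (a - kotheTrunc a N : kothe P hP) * (1 + kNorm p (b : ℕ → ℂ)) := by
        rw [hsplit]; exact kNorm_sub_mul_le hp (hMsub p hp _ _)
    _ ≤ kNorm p (a - kotheTrunc a N : kothe P hP) * (1 + C p) := by
        gcongr
        exact kNorm_nonneg (fun i => zero_le_one.trans (hP p hp i)) _
    _ < ε := by rw [kNorm_sub_kotheTrunc hp]; exact hN a ha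

/-- If every `p ∈ P` has a bounded subsequence, then the Köthe algebra `A(P)` has a
(right) locally bounded approximate identity. -/
theorem stmt12 (P : Set (ℕ → ℝ)) (hP : ∀ p ∈ P, ∀ i, (1 : ℝ) ≤ p i)
    (hdir : ∀ p ∈ P, ∀ q ∈ P, ∃ r ∈ P, ∀ i, max (p i) (q i) ≤ r i)
    (M : kothe P hP →ₗ[ℂ] kothe P hP →ₗ[ℂ] kothe P hP)
    (hMe : ∀ i j : ℕ, M (kotheE P hP i) (kotheE P hP j) = kotheE P hP (min i j))
    (hMsub : ∀ p ∈ P, ∀ a b : kothe P hP,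
      kNorm p (M a b : ℕ → ℂ) ≤ kNorm p (a : ℕ → ℂ) * kNorm p (b : ℕ → ℂ))
    (hbdd : ∀ p ∈ P, ∃ s : ℕ → ℕ, StrictMono s ∧ ∃ C : ℝ, ∀ m, p (s m) ≤ C) :
    ∃ C : (ℕ → ℝ) → ℝ, (∀ p ∈ P, 0 < C p) ∧
      ∀ (F : Finset (kothe P hP)), ∀ p ∈ P, ∀ ε : ℝ, 0 < ε →
        ∃ b : kothe P hP,
          (∀ a ∈ F, kNorm p ((a - M a b : kothe P hP) : ℕ → ℂ) < ε) ∧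
          kNorm p (b : ℕ → ℂ) ≤ C p :=
  stmt12_general P hP M hMe hMsub hbdd
end

section
/- Let P = {p^{(k)} : k ∈ ℕ} be the family of sequences defined via the matrices α^{(k)}_{ij} = ij (i ≤ k), = i (i > k) and a sum-monotone bijection φ : ℕ² → ℕ, i.e., p^{(k)}_n = α^{(k)}_{φ^{-1}(n)}. Then every sequence (x_m) in the Köthe space λ(P) satisfying ℓ(x_m) → ∞ and inf_m w(x_m) > 0 is unbounded in λ(P), where w(a) = ∑_n |a_n| and ℓ(a) = min{n : a_n ≠ 0}. -/
/-- The matrix `α^{(k)}`, indexed by pairs `(i,j)` of positive integers (here encoded by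
`ℕ × ℕ` via `(i,j) ↦ (i+1, j+1)`): `α^{(k)}_{ij} = i * j` if `i ≤ k`, and `= i` if
`i > k`. -/
def alphaMat (k : ℕ) (ij : ℕ × ℕ) : ℕ :=
  if ij.1 + 1 ≤ k then (ij.1 + 1) * (ij.2 + 1) else ij.1 + 1

lemma alphaMat_one_le (k : ℕ) (v : ℕ × ℕ) : 1 ≤ alphaMat k v := by
  unfold alphaMat; split
  · exact Nat.one_le_iff_ne_zero.mpr (Nat.mul_ne_zero (by omega) (by omega))
  · omega

/-- For the family `P = {p^{(k)}}` built from `α^{(k)}` and a sum-monotone bijection `φ`,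
every sequence `(x_m)` in the Köthe space `λ(P)` with `ℓ(x_m) → ∞` and
`inf_m w(x_m) > 0` is unbounded in `λ(P)`. -/
theorem stmt16 (φ : ℕ × ℕ ≃ ℕ)
    (hφ : ∀ v w : ℕ × ℕ, v.1 + v.2 < w.1 + w.2 → φ v < φ w)
    (x : ℕ → (ℕ → ℂ))
    -- each `x m` belongs to `λ(P)`
    (hmem : ∀ m k : ℕ, Summable fun n => ‖x m n‖ * (alphaMat k (φ.symm n) : ℝ))
    -- `ℓ(x_m) → ∞`
    (hℓ : ∀ N : ℕ, ∃ M₀ : ℕ, ∀ m ≥ M₀, ∀ n < N, x m n = 0)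
    -- `inf_m w(x_m) > 0`
    (hw : ∃ δ > (0 : ℝ), ∀ m, δ ≤ ∑' n, ‖x m n‖) :
    -- `(x_m)` is unbounded in `λ(P)`
    ¬ ∀ k : ℕ, ∃ C : ℝ, ∀ m, (∑' n, ‖x m n‖ * (alphaMat k (φ.symm n) : ℝ)) ≤ C := by
  intro hbd
  obtain ⟨δ, hδ, hwδ⟩ := hw
  obtain ⟨C1, hC1⟩ := hbd 1
  -- choose k with 1 ≤ k and C1 + δ < (k+1) * δ
  obtain ⟨k', hk'⟩ := exists_nat_gt ((C1 + δ) / δ)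
  set k : ℕ := k' + 1 with hkdef
  have hk1 : 1 ≤ k := Nat.le_add_left 1 k'
  have hkδ : C1 + δ < ((k : ℝ) + 1) * δ := by
    have : (C1 + δ) / δ < (k : ℝ) + 1 := by
      push_cast [hkdef]; linarith
    calc C1 + δ = (C1 + δ) / δ * δ := by field_simp
      _ < ((k : ℝ) + 1) * δ := by exact mul_lt_mul_of_pos_right this hδ
  obtain ⟨Ck, hCk⟩ := hbd k
  have hCk0 : 0 ≤ Ck := le_trans (tsum_nonneg fun n => by positivity) (hCk 0)
  -- choose T with k ≤ T and (k+1)*Ck < δ*(T-k+2)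
  obtain ⟨T, hT⟩ := exists_nat_gt (((k : ℝ) + 1) * Ck / δ + k)
  have hTk : (k : ℝ) ≤ T := by
    have : 0 ≤ ((k : ℝ) + 1) * Ck / δ := by positivity
    linarith
  have hTpos : (0 : ℝ) < (T : ℝ) - k + 2 := by linarith
  have hTbig : ((k : ℝ) + 1) * Ck < δ * ((T : ℝ) - k + 2) := by
    have h1 : ((k : ℝ) + 1) * Ck / δ < (T : ℝ) - k := by linarith
    have h2 : ((k : ℝ) + 1) * Ck < δ * ((T : ℝ) - k) := by
      calc ((k : ℝ) + 1) * Ck = ((k : ℝ) + 1) * Ck / δ * δ := by field_simp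
        _ < ((T : ℝ) - k) * δ := mul_lt_mul_of_pos_right h1 hδ
        _ = δ * ((T : ℝ) - k) := mul_comm _ _
    nlinarith
  -- choose N so that n ≥ N implies sum of φ.symm n ≥ T
  set N : ℕ := φ (T, 0) with hNdef
  have hN : ∀ n, N ≤ n → T ≤ (φ.symm n).1 + (φ.symm n).2 := by
    intro n hn
    by_contra h
    push_neg at h
    have : φ (φ.symm n) < φ (T, 0) := hφ _ _ (by simpa using h)
    rw [Equiv.apply_symm_apply] at this
    omega
  obtain ⟨M, hM⟩ := hℓ N
  set g : ℕ → ℝ := fun n => ‖x M n‖ with hgdef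
  set c : ℝ := ((k : ℝ) + 1) / ((T : ℝ) - k + 2) with hcdef
  have hc0 : 0 ≤ c := by positivity
  -- pointwise inequality
  have hpt : ∀ n, ((k : ℝ) + 1) * g n ≤
      g n * (alphaMat 1 (φ.symm n) : ℝ) + c * (g n * (alphaMat k (φ.symm n) : ℝ)) := by
    intro n
    rcases lt_or_ge n N with hn | hn
    · have hz : g n = 0 := by simp [hgdef, hM M le_rfl n hn]
      simp [hz]
    · have hsum := hN n hn
      set i := (φ.symm n).1
      set j := (φ.symm n).2
      have hg0 : 0 ≤ g n := norm_nonneg _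
      by_cases hik : i + 1 ≤ k
      · -- α^{(k)} = (i+1)(j+1) ≥ j+1 ≥ T-k+2
        have hak : (alphaMat k (φ.symm n) : ℝ) = ((i : ℝ) + 1) * ((j : ℝ) + 1) := by
          simp only [alphaMat]; rw [if_pos hik]; push_cast; ring
        have hjT : (T : ℝ) - k + 2 ≤ ((i : ℝ) + 1) * ((j : ℝ) + 1) := by
          have h1 : T ≤ i + j := hsum
          have h2 : (i : ℝ) + 1 ≤ k := by exact_mod_cast hik
          have h3 : (T : ℝ) ≤ (i : ℝ) + j := by exact_mod_cast h1
          nlinarith [Nat.cast_nonneg (α := ℝ) i, Nat.cast_nonneg (α := ℝ) j]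
        have ha1 : (0 : ℝ) ≤ g n * (alphaMat 1 (φ.symm n) : ℝ) := by positivity
        have key : ((k : ℝ) + 1) * g n ≤ c * (g n * (alphaMat k (φ.symm n) : ℝ)) := by
          rw [hak, hcdef]
          rw [div_mul_eq_mul_div, le_div_iff₀ hTpos]
          have hkk : (0 : ℝ) ≤ (k : ℝ) + 1 := by positivity
          nlinarith [mul_le_mul_of_nonneg_left (mul_le_mul_of_nonneg_left hjT hg0) hkk]
        linarith
      · -- i + 1 > k ≥ 1, so α^{(1)} = i+1 ≥ k+1
        have hik' : ¬ i + 1 ≤ 1 := by omega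
        have ha1 : (alphaMat 1 (φ.symm n) : ℝ) = (i : ℝ) + 1 := by
          simp only [alphaMat]; rw [if_neg hik']; push_cast; ring
        have hki : (k : ℝ) + 1 ≤ (i : ℝ) + 1 := by
          have : k + 1 ≤ i + 1 := by omega
          exact_mod_cast this
        have h2 : (0 : ℝ) ≤ c * (g n * (alphaMat k (φ.symm n) : ℝ)) := by positivity
        have : ((k : ℝ) + 1) * g n ≤ g n * ((i : ℝ) + 1) := by nlinarith
        rw [ha1]; linarith
  -- summability
  have hs1 : Summable fun n => g n * (alphaMat 1 (φ.symm n) : ℝ) := hmem M 1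
  have hsk : Summable fun n => g n * (alphaMat k (φ.symm n) : ℝ) := hmem M k
  have hsg : Summable g := by
    apply Summable.of_nonneg_of_le (fun n => norm_nonneg _) _ hs1
    intro n
    have h1 : (1 : ℝ) ≤ (alphaMat 1 (φ.symm n) : ℝ) := by
      exact_mod_cast alphaMat_one_le 1 (φ.symm n)
    nlinarith [norm_nonneg (x M n)]
  -- sum the pointwise inequality
  have hRHS : Summable fun n => g n * (alphaMat 1 (φ.symm n) : ℝ)
      + c * (g n * (alphaMat k (φ.symm n) : ℝ)) := hs1.add (hsk.mul_left c)
  have hmain : ((k : ℝ) + 1) * ∑' n, g n ≤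
      (∑' n, g n * (alphaMat 1 (φ.symm n) : ℝ)) + c * ∑' n, g n * (alphaMat k (φ.symm n) : ℝ) := by
    rw [← tsum_mul_left, ← tsum_mul_left (a := c), ← Summable.tsum_add hs1 (hsk.mul_left c)]
    exact Summable.tsum_le_tsum hpt (hsg.mul_left _) hRHS
  have hδle : δ ≤ ∑' n, g n := hwδ M
  have hle1 : (∑' n, g n * (alphaMat 1 (φ.symm n) : ℝ)) ≤ C1 := hC1 M
  have hlek : (∑' n, g n * (alphaMat k (φ.symm n) : ℝ)) ≤ Ck := hCk M
  have hcCk : c * Ck < δ := by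
    rw [hcdef, div_mul_eq_mul_div, div_lt_iff₀ hTpos]
    linarith [hTbig]
  have h1 : ((k : ℝ) + 1) * δ ≤ ((k : ℝ) + 1) * ∑' n, g n :=
    mul_le_mul_of_nonneg_left hδle (by positivity)
  have h2 : c * ∑' n, g n * (alphaMat k (φ.symm n) : ℝ) ≤ c * Ck := by
    exact mul_le_mul_of_nonneg_left hlek hc0
  have B : ((k : ℝ) + 1) * δ < ((k : ℝ) + 1) * δ :=
    calc ((k : ℝ) + 1) * δ ≤ ((k : ℝ) + 1) * ∑' n, g n := h1
      _ ≤ (∑' n, g n * (alphaMat 1 (φ.symm n) : ℝ))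
          + c * ∑' n, g n * (alphaMat k (φ.symm n) : ℝ) := hmain
      _ ≤ C1 + c * Ck := add_le_add hle1 h2
      _ < C1 + δ := by linarith [hcCk]
      _ < ((k : ℝ) + 1) * δ := hkδ
  exact absurd B (lt_irrefl _)
end

section
/- There exists a commutative Fréchet–Arens–Michael algebra A (namely the Köthe algebra A(P) for the family P built from α^{(k)}_{ij} = ij for i ≤ k, = i for i > k) which has a locally bounded approximate identity but does not have a bounded approximate identity. -/
open Filter

/-- The family `P = {p^{(k)}}` built from the matrices `α^{(k)}`. -/
def alphaFamily (φ : ℕ × ℕ ≃ ℕ) : Set (ℕ → ℝ) :=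
  {p | ∃ k : ℕ, p = fun n => (alphaMat k (φ.symm n) : ℝ)}

lemma alphaFamily_ge_one (φ : ℕ × ℕ ≃ ℕ) :
    ∀ p ∈ alphaFamily φ, ∀ i, (1 : ℝ) ≤ p i := by
  rintro p ⟨k, rfl⟩ i
  have h : 1 ≤ alphaMat k (φ.symm i) := by
    unfold alphaMat
    split
    · exact Nat.one_le_iff_ne_zero.mpr (Nat.mul_ne_zero (Nat.succ_ne_zero _) (Nat.succ_ne_zero _))
    · omega
  have h' : (1 : ℝ) ≤ (alphaMat k (φ.symm i) : ℝ) := by exact_mod_cast h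
  simpa using h'



noncomputable def tailC (x : ℕ → ℂ) (n : ℕ) : ℂ := ∑' j, x (n + j)
noncomputable def tailR (x : ℕ → ℝ) (n : ℕ) : ℝ := ∑' j, x (n + j)
noncomputable def mulF (a b : ℕ → ℂ) (n : ℕ) : ℂ := a n * tailC b n + b n * tailC a (n + 1)

lemma summable_shift {x : ℕ → ℝ} (hx : Summable x) (n : ℕ) : Summable fun j => x (n + j) :=
  ((summable_nat_add_iff n).mpr hx).congr fun j => by rw [add_comm]

lemma tailR_nonneg {x : ℕ → ℝ} (h0 : ∀ n, 0 ≤ x n) (n : ℕ) : 0 ≤ tailR x n :=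
  tsum_nonneg fun j => h0 _

lemma tailR_zero {x : ℕ → ℝ} : tailR x 0 = ∑' n, x n := tsum_congr fun j => by rw [zero_add]

lemma tailR_succ {x : ℕ → ℝ} (hx : Summable x) (n : ℕ) : tailR x n = x n + tailR x (n + 1) := by
  have := Summable.tsum_eq_zero_add (summable_shift hx n)
  rw [tailR, this, add_zero]
  congr 1
  exact tsum_congr fun j => by rw [show n + (j+1) = n + 1 + j by omega]

lemma tailR_le {x y : ℕ → ℝ} (hle : ∀ n, x n ≤ y n) (h0 : ∀ n, 0 ≤ x n) (hy : Summable y)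
    (n : ℕ) : tailR x n ≤ tailR y n :=
  Summable.tsum_le_tsum (fun j => hle _)
    ((summable_shift hy n).of_nonneg_of_le (fun j => h0 _) fun j => hle _) (summable_shift hy n)

lemma norm_tailC_le {x : ℕ → ℂ} (hx : Summable fun i => ‖x i‖) (n : ℕ) :
    ‖tailC x n‖ ≤ tailR (fun i => ‖x i‖) n :=
  norm_tsum_le_tsum_norm (summable_shift hx n)

/-- The telescoping inequality `∑ (Aₙ·TBₙ + Bₙ·TA_{n+1}) ≤ (∑A)(∑B)`. -/
lemma telescope_ineq {A B : ℕ → ℝ} (hA : Summable A) (hB : Summable B)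
    (hA0 : ∀ n, 0 ≤ A n) (hB0 : ∀ n, 0 ≤ B n) :
    ∑' n, (A n * tailR B n + B n * tailR A (n + 1)) ≤ (∑' n, A n) * (∑' n, B n) := by
  have key : ∀ N, ∑ n ∈ Finset.range N, (A n * tailR B n + B n * tailR A (n + 1))
      = tailR A 0 * tailR B 0 - tailR A N * tailR B N := by
    intro N
    induction N with
    | zero => simp
    | succ N ih =>
      rw [Finset.sum_range_succ, ih, tailR_succ hA N, tailR_succ hB N]
      ring
  have h := Real.tsum_le_of_sum_range_le (c := tailR A 0 * tailR B 0)
    (fun n => add_nonneg (mul_nonneg (hA0 n) (tailR_nonneg hB0 n))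
      (mul_nonneg (hB0 n) (tailR_nonneg hA0 _))) fun N => by
        rw [key]
        have := mul_nonneg (tailR_nonneg hA0 N) (tailR_nonneg hB0 N)
        linarith
  rwa [tailR_zero, tailR_zero] at h

/-- Pointwise bound for the weighted product. -/
lemma mulF_bound {p : ℕ → ℝ} (hp1 : ∀ i, 1 ≤ p i) {a b : ℕ → ℂ}
    (ha : Summable fun n => ‖a n‖ * p n) (hb : Summable fun n => ‖b n‖ * p n) (n : ℕ) :
    ‖mulF a b n‖ * p n ≤ (‖a n‖ * p n) * tailR (fun i => ‖b i‖ * p i) n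
      + (‖b n‖ * p n) * tailR (fun i => ‖a i‖ * p i) (n + 1) := by
  have hp0 : ∀ i, (0:ℝ) ≤ p i := fun i => zero_le_one.trans (hp1 i)
  have hna : Summable fun i => ‖a i‖ :=
    ha.of_nonneg_of_le (fun i => norm_nonneg _) fun i =>
      le_mul_of_one_le_right (norm_nonneg _) (hp1 i)
  have hnb : Summable fun i => ‖b i‖ :=
    hb.of_nonneg_of_le (fun i => norm_nonneg _) fun i =>
      le_mul_of_one_le_right (norm_nonneg _) (hp1 i)
  have h2 : tailR (fun i => ‖b i‖) n ≤ tailR (fun i => ‖b i‖ * p i) n :=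
    tailR_le (fun i => le_mul_of_one_le_right (norm_nonneg _) (hp1 i))
      (fun i => norm_nonneg _) hb n
  have h3 : tailR (fun i => ‖a i‖) (n + 1) ≤ tailR (fun i => ‖a i‖ * p i) (n + 1) :=
    tailR_le (fun i => le_mul_of_one_le_right (norm_nonneg _) (hp1 i))
      (fun i => norm_nonneg _) ha (n + 1)
  have h1 : ‖mulF a b n‖ ≤ ‖a n‖ * tailR (fun i => ‖b i‖ * p i) n
      + ‖b n‖ * tailR (fun i => ‖a i‖ * p i) (n + 1) := by
    refine (norm_add_le _ _).trans ?_
    rw [norm_mul, norm_mul]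
    gcongr
    · exact (norm_tailC_le hnb n).trans h2
    · exact (norm_tailC_le hna (n + 1)).trans h3
  calc ‖mulF a b n‖ * p n
      ≤ (‖a n‖ * tailR (fun i => ‖b i‖ * p i) n
          + ‖b n‖ * tailR (fun i => ‖a i‖ * p i) (n + 1)) * p n :=
        mul_le_mul_of_nonneg_right h1 (hp0 n)
    _ = (‖a n‖ * p n) * tailR (fun i => ‖b i‖ * p i) n
          + (‖b n‖ * p n) * tailR (fun i => ‖a i‖ * p i) (n + 1) := by ring

lemma tailR_le_tsum {x : ℕ → ℝ} (h0 : ∀ i, 0 ≤ x i) (hx : Summable x) (n : ℕ) :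
    tailR x n ≤ ∑' i, x i :=
  Summable.tsum_le_tsum_of_inj (fun j => n + j) (fun x y h => by simpa using h) (fun c _ => h0 c)
    (fun _ => le_rfl) (summable_shift hx n) hx

lemma g_summable {A B : ℕ → ℝ} (hA : Summable A) (hB : Summable B)
    (hA0 : ∀ n, 0 ≤ A n) (hB0 : ∀ n, 0 ≤ B n) :
    Summable fun n => A n * tailR B n + B n * tailR A (n + 1) := by
  refine Summable.of_nonneg_of_le
    (g := fun n => A n * tailR B n + B n * tailR A (n + 1))
    (f := fun n => A n * (∑' i, B i) + B n * (∑' i, A i))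
    (fun n => add_nonneg (mul_nonneg (hA0 n) (tailR_nonneg hB0 n))
      (mul_nonneg (hB0 n) (tailR_nonneg hA0 _)))
    (fun n => add_le_add
      (mul_le_mul_of_nonneg_left (tailR_le_tsum hB0 hB n) (hA0 n))
      (mul_le_mul_of_nonneg_left (tailR_le_tsum hA0 hA (n + 1)) (hB0 n)))
    ((hA.mul_right _).add (hB.mul_right _))

lemma mulF_summable {p : ℕ → ℝ} (hp1 : ∀ i, 1 ≤ p i) {a b : ℕ → ℂ}
    (ha : Summable fun n => ‖a n‖ * p n) (hb : Summable fun n => ‖b n‖ * p n) :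
    Summable fun n => ‖mulF a b n‖ * p n := by
  have hp0 : ∀ i, (0:ℝ) ≤ p i := fun i => zero_le_one.trans (hp1 i)
  exact Summable.of_nonneg_of_le (fun n => mul_nonneg (norm_nonneg _) (hp0 n))
    (mulF_bound hp1 ha hb)
    (g_summable ha hb (fun i => mul_nonneg (norm_nonneg _) (hp0 i))
      (fun i => mul_nonneg (norm_nonneg _) (hp0 i)))

/-- The weighted norm of the product is at most the product of weighted norms. -/
lemma kNorm_mulF_le {p : ℕ → ℝ} (hp1 : ∀ i, 1 ≤ p i) {a b : ℕ → ℂ}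
    (ha : Summable fun n => ‖a n‖ * p n) (hb : Summable fun n => ‖b n‖ * p n) :
    kNorm p (mulF a b) ≤ kNorm p a * kNorm p b := by
  have hp0 : ∀ i, (0:ℝ) ≤ p i := fun i => zero_le_one.trans (hp1 i)
  exact (Summable.tsum_le_tsum (mulF_bound hp1 ha hb) (mulF_summable hp1 ha hb)
      (g_summable ha hb (fun i => mul_nonneg (norm_nonneg _) (hp0 i))
        (fun i => mul_nonneg (norm_nonneg _) (hp0 i)))).trans
    (telescope_ineq ha hb (fun i => mul_nonneg (norm_nonneg _) (hp0 i))
      (fun i => mul_nonneg (norm_nonneg _) (hp0 i)))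

lemma summable_shiftC {x : ℕ → ℂ} (hx : Summable x) (n : ℕ) : Summable fun j => x (n + j) :=
  ((summable_nat_add_iff n).mpr hx).congr fun j => by rw [add_comm]

lemma tailC_succ {x : ℕ → ℂ} (hx : Summable x) (n : ℕ) : tailC x n = x n + tailC x (n + 1) := by
  have := Summable.tsum_eq_zero_add (summable_shiftC hx n)
  rw [tailC, this, add_zero]
  congr 1
  exact tsum_congr fun j => by rw [show n + (j+1) = n + 1 + j by omega]

lemma tailC_add {x y : ℕ → ℂ} (hx : Summable x) (hy : Summable y) (n : ℕ) :
    tailC (x + y) n = tailC x n + tailC y n := by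
  unfold tailC
  rw [← Summable.tsum_add (summable_shiftC hx n) (summable_shiftC hy n)]
  rfl

lemma tailC_smul (x : ℕ → ℂ) (c : ℂ) (n : ℕ) : tailC (c • x) n = c * tailC x n := by
  unfold tailC
  rw [← tsum_mul_left]
  rfl

lemma mulF_add_left {x y : ℕ → ℂ} (b : ℕ → ℂ) (hx : Summable x) (hy : Summable y) :
    mulF (x + y) b = mulF x b + mulF y b := by
  funext n
  simp only [mulF, Pi.add_apply, tailC_add hx hy]
  ring

lemma mulF_smul_left {x : ℕ → ℂ} (b : ℕ → ℂ) (c : ℂ) :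
    mulF (c • x) b = c • mulF x b := by
  funext n
  simp only [mulF, Pi.smul_apply, tailC_smul, smul_eq_mul]
  ring

lemma mulF_comm {x y : ℕ → ℂ} (hx : Summable x) (hy : Summable y) :
    mulF x y = mulF y x := by
  funext n
  simp only [mulF]
  rw [tailC_succ hx n, tailC_succ hy n]
  ring

lemma mulF_add_right {x y : ℕ → ℂ} (a : ℕ → ℂ) (ha : Summable a) (hx : Summable x)
    (hy : Summable y) : mulF a (x + y) = mulF a x + mulF a y := by
  rw [mulF_comm (y := x + y) ha (hx.add hy), mulF_add_left a hx hy,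
    mulF_comm hx ha, mulF_comm hy ha]

lemma mulF_smul_right {x : ℕ → ℂ} (a : ℕ → ℂ) (c : ℂ) (ha : Summable a) (hx : Summable x) :
    mulF a (c • x) = c • mulF a x := by
  rw [mulF_comm (y := c • x) ha (hx.const_smul c), mulF_smul_left a c, mulF_comm hx ha]

lemma tailC_single (N n : ℕ) : tailC (Pi.single N (1:ℂ)) n = if n ≤ N then 1 else 0 := by
  unfold tailC
  by_cases h : n ≤ N
  · rw [if_pos h]
    have h2 : (∑' j, (Pi.single N 1 : ℕ → ℂ) (n + j)) = ∑' j, if j = N - n then (1:ℂ) else 0 :=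
      tsum_congr fun j => by
        rw [Pi.single_apply]
        congr 1
        simp only [eq_iff_iff]
        omega
    rw [h2, tsum_ite_eq]
  · rw [if_neg h]
    have h2 : (∑' j, (Pi.single N 1 : ℕ → ℂ) (n + j)) = ∑' (_ : ℕ), (0:ℂ) :=
      tsum_congr fun j => by rw [Pi.single_apply, if_neg (by omega)]
    rw [h2, tsum_zero]

lemma mulF_single_single (i j : ℕ) :
    mulF (Pi.single i (1:ℂ)) (Pi.single j (1:ℂ)) = Pi.single (min i j) (1:ℂ) := by
  funext n
  simp only [mulF, tailC_single, Pi.single_apply]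
  split_ifs <;> simp_all <;> omega

lemma mulF_single_right {a : ℕ → ℂ} (N n : ℕ) :
    mulF a (Pi.single N 1) n
      = a n * (if n ≤ N then 1 else 0) + (if n = N then 1 else 0) * tailC a (n + 1) := by
  simp only [mulF, tailC_single, Pi.single_apply]

lemma sub_mulF_single_right {a : ℕ → ℂ} (N n : ℕ) :
    a n - mulF a (Pi.single N 1) n
      = if n = N then -tailC a (N + 1) else if n ≤ N then 0 else a n := by
  rw [mulF_single_right]
  split_ifs with h1 h2 <;> simp_all <;> first | ring | (rw [if_neg (by omega)]; ring)

lemma mulF_single_left_self {u : ℕ → ℂ} (N : ℕ) :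
    mulF (Pi.single N 1) u N = tailC u N := by
  simp only [mulF, tailC_single, Pi.single_apply, if_pos rfl, one_mul]
  norm_num

-- concrete-setting helpers
section concrete
variable (φ : ℕ × ℕ ≃ ℕ)

lemma memP (k : ℕ) : (fun n => (alphaMat k (φ.symm n) : ℝ)) ∈ alphaFamily φ := ⟨k, rfl⟩

lemma knorm_summable (a : kothe (alphaFamily φ) (alphaFamily_ge_one φ)) :
    Summable fun n => ‖(a : ℕ → ℂ) n‖ :=
  (a.2 _ (memP φ 0)).of_nonneg_of_le (fun n => norm_nonneg _)
    (fun n => le_mul_of_one_le_right (norm_nonneg _) (alphaFamily_ge_one φ _ (memP φ 0) n))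

lemma ksummableC (a : kothe (alphaFamily φ) (alphaFamily_ge_one φ)) :
    Summable ((a : ℕ → ℂ)) := (knorm_summable φ a).of_norm

/-- The multiplication on the Köthe algebra, as a bilinear map. -/
noncomputable def MK : kothe (alphaFamily φ) (alphaFamily_ge_one φ) →ₗ[ℂ]
    kothe (alphaFamily φ) (alphaFamily_ge_one φ) →ₗ[ℂ]
    kothe (alphaFamily φ) (alphaFamily_ge_one φ) :=
  LinearMap.mk₂ ℂ
    (fun a b => ⟨mulF a b, fun p hp =>
      mulF_summable (alphaFamily_ge_one φ p hp) (a.2 p hp) (b.2 p hp)⟩)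
    (fun a a' b => Subtype.ext (by
      show mulF ((a : ℕ → ℂ) + (a' : ℕ → ℂ)) b = mulF a b + mulF a' b
      exact mulF_add_left _ (ksummableC φ a) (ksummableC φ a')))
    (fun c a b => Subtype.ext (by
      show mulF (c • (a : ℕ → ℂ)) b = c • mulF a b
      exact mulF_smul_left _ c))
    (fun a b b' => Subtype.ext (by
      show mulF a ((b : ℕ → ℂ) + (b' : ℕ → ℂ)) = mulF a b + mulF a b'
      exact mulF_add_right _ (ksummableC φ a) (ksummableC φ b) (ksummableC φ b')))
    (fun c a b => Subtype.ext (by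
      show mulF a (c • (b : ℕ → ℂ)) = c • mulF a b
      exact mulF_smul_right _ c (ksummableC φ a) (ksummableC φ b)))

lemma MK_coe (a b : kothe (alphaFamily φ) (alphaFamily_ge_one φ)) :
    ((MK φ a b : kothe (alphaFamily φ) (alphaFamily_ge_one φ)) : ℕ → ℂ) = mulF a b := rfl

end concrete

lemma kNorm_single (p : ℕ → ℝ) (N : ℕ) : kNorm p (Pi.single N 1) = p N := by
  unfold kNorm
  rw [tsum_eq_single N (fun i hi => by
    rw [show (Pi.single N 1 : ℕ → ℂ) i = 0 from Pi.single_eq_of_ne hi 1]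
    simp)]
  simp

/-- Exact formula for `‖a - a·e_N‖_p`. -/
lemma kNorm_sub_single (p : ℕ → ℝ) {a : ℕ → ℂ}
    (hap : Summable fun n => ‖a n‖ * p n) (N : ℕ) :
    kNorm p (fun n => a n - mulF a (Pi.single N 1) n)
      = ‖tailC a (N + 1)‖ * p N + ∑' i, ‖a (i + (N + 1))‖ * p (i + (N + 1)) := by
  set d := fun n => a n - mulF a (Pi.single N 1) n with hd
  have hdval : ∀ n, d n = if n = N then -tailC a (N + 1) else if n ≤ N then 0 else a n :=
    fun n => sub_mulF_single_right N n
  have htail : ∀ i : ℕ, d (i + (N + 1)) = a (i + (N + 1)) := fun i => by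
    rw [hdval, if_neg (by omega), if_neg (by omega)]
  have hds : Summable fun n => ‖d n‖ * p n := by
    refine (summable_nat_add_iff (N + 1)).mp ?_
    exact (((summable_nat_add_iff (N + 1)).mpr hap)).congr fun i => by rw [htail i]
  have := (Summable.sum_add_tsum_nat_add (N + 1) hds).symm
  rw [kNorm, this]
  congr 1
  · rw [Finset.sum_eq_single N (fun n hn hne => by
      rw [hdval, if_neg hne, if_pos (by simp at hn; omega)]
      simp) (fun h => absurd (Finset.self_mem_range_succ N) h)]
    rw [hdval, if_pos rfl, norm_neg]
  · exact tsum_congr fun i => by rw [htail i]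

open scoped Classical in
/-- Choice of the constant `C_p = k + 1` for `p = p^{(k)}`. -/
noncomputable def Ck (φ : ℕ × ℕ ≃ ℕ) (p : ℕ → ℝ) : ℝ :=
  if h : ∃ k : ℕ, p = fun n => (alphaMat k (φ.symm n) : ℝ) then (h.choose : ℝ) + 1 else 1


/-- There is a commutative Fréchet–Arens–Michael algebra — namely the Köthe algebra
`A(P)` for the family `P` built from `α^{(k)}` — which has a locally bounded approximate
identity but no bounded approximate identity. -/
theorem stmt17 (φ : ℕ × ℕ ≃ ℕ)
    (hφ : ∀ v w : ℕ × ℕ, v.1 + v.2 < w.1 + w.2 → φ v < φ w) :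
    ∃ M : kothe (alphaFamily φ) (alphaFamily_ge_one φ) →ₗ[ℂ]
        kothe (alphaFamily φ) (alphaFamily_ge_one φ) →ₗ[ℂ]
        kothe (alphaFamily φ) (alphaFamily_ge_one φ),
      -- the multiplication `e_i e_j = e_{min(i,j)}`
      (∀ i j : ℕ, M (kotheE _ (alphaFamily_ge_one φ) i) (kotheE _ (alphaFamily_ge_one φ) j)
          = kotheE _ (alphaFamily_ge_one φ) (min i j)) ∧
      -- commutativity
      (∀ a b, M a b = M b a) ∧
      -- submultiplicativity of the seminorms (in particular joint continuity)
      (∀ p ∈ alphaFamily φ, ∀ a b,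
        kNorm p (M a b : ℕ → ℂ) ≤ kNorm p (a : ℕ → ℂ) * kNorm p (b : ℕ → ℂ)) ∧
      -- locally bounded approximate identity
      (∃ C : (ℕ → ℝ) → ℝ, (∀ p ∈ alphaFamily φ, 0 < C p) ∧
        ∀ (F : Finset (kothe (alphaFamily φ) (alphaFamily_ge_one φ))),
          ∀ p ∈ alphaFamily φ, ∀ ε : ℝ, 0 < ε →
            ∃ b, (∀ a ∈ F, kNorm p ((a - M a b :
                kothe (alphaFamily φ) (alphaFamily_ge_one φ)) : ℕ → ℂ) < ε) ∧
              kNorm p (b : ℕ → ℂ) ≤ C p) ∧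
      -- but no bounded approximate identity
      ¬ (∃ (ι : Type) (pr : Preorder ι),
          (∀ x y : ι, ∃ z, pr.le x z ∧ pr.le y z) ∧ Nonempty ι ∧
          ∃ u : ι → kothe (alphaFamily φ) (alphaFamily_ge_one φ),
            (∀ p ∈ alphaFamily φ, ∃ C : ℝ, ∀ i, kNorm p (u i : ℕ → ℂ) ≤ C) ∧
            ∀ a, ∀ p ∈ alphaFamily φ,
              Tendsto (fun i => kNorm p ((a - M a (u i) :
                  kothe (alphaFamily φ) (alphaFamily_ge_one φ)) : ℕ → ℂ))
                (@Filter.atTop ι pr) (nhds 0)) := by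
    classical
  refine ⟨MK φ, ?_, ?_, ?_, ?_, ?_⟩
  · -- e_i e_j = e_{min i j}
    intro i j
    exact Subtype.ext (mulF_single_single i j)
  · -- commutativity
    intro a b
    exact Subtype.ext (mulF_comm (ksummableC φ a) (ksummableC φ b))
  · -- submultiplicativity
    intro p hp a b
    exact kNorm_mulF_le (alphaFamily_ge_one φ p hp) (a.2 p hp) (b.2 p hp)
  · -- locally bounded approximate identity
    refine ⟨Ck φ, ?_, ?_⟩
    · intro p hp
      have hpE : ∃ k : ℕ, p = fun n => (alphaMat k (φ.symm n) : ℝ) := hp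
      rw [Ck]
      rw [dif_pos hpE]
      positivity
    · intro F p hp ε hε
      have hpE : ∃ k : ℕ, p = fun n => (alphaMat k (φ.symm n) : ℝ) := hp
      set k := hpE.choose with hkdef
      have hk : p = fun n => (alphaMat k (φ.symm n) : ℝ) := hpE.choose_spec
      have hCval : Ck φ p = (k : ℝ) + 1 := by
        rw [Ck]
        rw [dif_pos hpE]
      -- the subsequence N_j = φ (k, j), on which p has value k + 1
      set seq : ℕ → ℕ := fun j => φ (k, j) with hseq
      have hseqmono : StrictMono seq := fun j₁ j₂ h =>
        hφ (k, j₁) (k, j₂) (by simpa using h)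
      have hseqtop : Tendsto seq atTop atTop := hseqmono.tendsto_atTop
      have hpval : ∀ j, p (seq j) = (k : ℝ) + 1 := by
        intro j
        rw [hk]
        simp only [hseq, Equiv.symm_apply_apply]
        rw [alphaMat, if_neg (by omega)]
        push_cast
        ring
      -- the bound
      set bnd : kothe (alphaFamily φ) (alphaFamily_ge_one φ) → ℕ → ℝ := fun a N =>
        ((k : ℝ) + 1) * tailR (fun i => ‖(a : ℕ → ℂ) i‖) (N + 1)
          + tailR (fun i => ‖(a : ℕ → ℂ) i‖ * p i) (N + 1) with hbnddef
      have key : ∀ (a : kothe (alphaFamily φ) (alphaFamily_ge_one φ)) N, p N = (k : ℝ) + 1 →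
          kNorm p ((a - MK φ a (kotheE _ (alphaFamily_ge_one φ) N) :
            kothe (alphaFamily φ) (alphaFamily_ge_one φ)) : ℕ → ℂ) ≤ bnd a N := by
        intro a N hpN
        have hco : ((a - MK φ a (kotheE _ (alphaFamily_ge_one φ) N) :
            kothe (alphaFamily φ) (alphaFamily_ge_one φ)) : ℕ → ℂ)
            = fun n => (a : ℕ → ℂ) n - mulF a (Pi.single N 1) n := rfl
        rw [hco, kNorm_sub_single p (a.2 p hp) N]
        have h1 : ‖tailC (a : ℕ → ℂ) (N + 1)‖ * p N
            ≤ ((k : ℝ) + 1) * tailR (fun i => ‖(a : ℕ → ℂ) i‖) (N + 1) := by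
          rw [hpN, mul_comm]
          exact mul_le_mul_of_nonneg_left (norm_tailC_le (knorm_summable φ a) (N + 1))
            (by positivity)
        have h2 : (∑' i, ‖(a : ℕ → ℂ) (i + (N + 1))‖ * p (i + (N + 1)))
            = tailR (fun i => ‖(a : ℕ → ℂ) i‖ * p i) (N + 1) :=
          tsum_congr fun i => by rw [add_comm]
        rw [h2]
        exact add_le_add h1 le_rfl
      -- the bound tends to zero
      have hbz : ∀ a : kothe (alphaFamily φ) (alphaFamily_ge_one φ),
          Tendsto (bnd a) atTop (nhds 0) := by
        intro a
        have tz : ∀ x : ℕ → ℝ, Summable x → Tendsto (fun N => tailR x (N + 1)) atTop (nhds 0) := by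
          intro x hx
          have h1 : (fun N => tailR x (N + 1))
              = (fun i => ∑' m, x (m + i)) ∘ (fun N => N + 1) := by
            funext N
            exact tsum_congr fun m => by rw [add_comm]
          rw [h1]
          exact (tendsto_sum_nat_add x).comp (tendsto_add_atTop_nat 1)
        have := ((tz _ (knorm_summable φ a)).const_mul ((k : ℝ) + 1)).add (tz _ (a.2 p hp))
        simpa using this
      have hev : ∀ᶠ j in atTop, ∀ a ∈ F, bnd a (seq j) < ε :=
        F.eventually_all.2 fun a _ =>
          ((hbz a).comp hseqtop).eventually_lt_const hε
      obtain ⟨j, hj⟩ := hev.exists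
      refine ⟨kotheE _ (alphaFamily_ge_one φ) (seq j), fun a ha => ?_, ?_⟩
      · exact lt_of_le_of_lt (key a (seq j) (hpval j)) (hj a ha)
      · have : kNorm p ((kotheE _ (alphaFamily_ge_one φ) (seq j) : ℕ → ℂ)) = p (seq j) :=
          kNorm_single p (seq j)
        rw [this, hpval j, hCval]
  · -- no bounded approximate identity
    rintro ⟨ι, pr, hdir, ⟨i0⟩, u, hbnd, hcv⟩
    letI := pr
    haveI : Nonempty ι := ⟨i0⟩
    haveI : (atTop : Filter ι).NeBot :=
      atTop_neBot_iff.mpr ⟨⟨i0⟩, ⟨fun x y => hdir x y⟩⟩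
    obtain ⟨C1, hC1⟩ := hbnd _ (memP φ 1)
    set R : ℕ := ⌈4 * C1⌉₊ + 1 with hRdef
    have hR4 : C1 < ((R : ℝ) + 1) / 4 := by
      have := Nat.le_ceil (4 * C1)
      have hcast : ((⌈4 * C1⌉₊ : ℝ)) ≤ (R : ℝ) := by
        rw [hRdef]; push_cast; linarith
      linarith
    have hR1 : 1 ≤ R := by omega
    obtain ⟨CR, hCR⟩ := hbnd _ (memP φ R)
    set J : ℕ := ⌈4 * CR⌉₊ with hJdef
    have hJ4 : CR < ((J : ℝ) + 1) / 4 := by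
      have := Nat.le_ceil (4 * CR)
      linarith
    set N : ℕ := φ (R + J, 0) with hNdef
    -- every coordinate beyond N lies in a "heavy" region
    have key1 : ∀ n, N ≤ n → R ≤ (φ.symm n).1 ∨ (J ≤ (φ.symm n).2 ∧ (φ.symm n).1 < R) := by
      intro n hn
      have hsum : R + J ≤ (φ.symm n).1 + (φ.symm n).2 := by
        by_contra h
        have := hφ (φ.symm n) (R + J, 0) (by push_neg at h; simpa using h)
        rw [Equiv.apply_symm_apply] at this
        omega
      by_cases h : R ≤ (φ.symm n).1
      · exact Or.inl h
      · exact Or.inr ⟨by omega, by omega⟩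
    set p1 : ℕ → ℝ := fun n => (alphaMat 1 (φ.symm n) : ℝ) with hp1def
    set pR : ℕ → ℝ := fun n => (alphaMat R (φ.symm n) : ℝ) with hpRdef
    -- pointwise estimate on the tail
    have hpoint : ∀ (x : ℕ → ℂ) n, N ≤ n →
        ‖x n‖ ≤ ‖x n‖ * p1 n / ((R : ℝ) + 1) + ‖x n‖ * pR n / ((J : ℝ) + 1) := by
      intro x n hn
      have hp1nn : (0 : ℝ) ≤ p1 n := by simp [hp1def]
      have hpRnn : (0 : ℝ) ≤ pR n := by simp [hpRdef]
      rcases key1 n hn with h | ⟨hJle, hiR⟩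
      · have hval : ((R : ℝ) + 1) ≤ p1 n := by
          have e : alphaMat 1 (φ.symm n) = (φ.symm n).1 + 1 := by
            rw [alphaMat, if_neg (by omega)]
          show ((R : ℝ) + 1) ≤ ((alphaMat 1 (φ.symm n) : ℕ) : ℝ)
          rw [e]
          exact_mod_cast Nat.succ_le_succ h
        have h1 : ‖x n‖ ≤ ‖x n‖ * p1 n / ((R : ℝ) + 1) := by
          rw [le_div_iff₀ (by positivity)]
          exact mul_le_mul_of_nonneg_left hval (norm_nonneg _)
        have h2 : (0 : ℝ) ≤ ‖x n‖ * pR n / ((J : ℝ) + 1) := by positivity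
        linarith
      · have hval : ((J : ℝ) + 1) ≤ pR n := by
          have e : alphaMat R (φ.symm n) = ((φ.symm n).1 + 1) * ((φ.symm n).2 + 1) := by
            rw [alphaMat, if_pos (by omega)]
          show ((J : ℝ) + 1) ≤ ((alphaMat R (φ.symm n) : ℕ) : ℝ)
          rw [e]
          have : J + 1 ≤ ((φ.symm n).1 + 1) * ((φ.symm n).2 + 1) :=
            le_trans (by omega) (Nat.le_mul_of_pos_left _ (by omega))
          exact_mod_cast this
        have h1 : ‖x n‖ ≤ ‖x n‖ * pR n / ((J : ℝ) + 1) := by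
          rw [le_div_iff₀ (by positivity)]
          exact mul_le_mul_of_nonneg_left hval (norm_nonneg _)
        have h2 : (0 : ℝ) ≤ ‖x n‖ * p1 n / ((R : ℝ) + 1) := by positivity
        linarith
    -- uniform bound on the tails of the `u i`
    have tailbound : ∀ i : ι, ‖tailC ((u i : ℕ → ℂ)) N‖ ≤ 1 / 2 := by
      intro α
      have hsum1 : Summable fun n => ‖(u α : ℕ → ℂ) n‖ * p1 n := (u α).2 _ (memP φ 1)
      have hsumR : Summable fun n => ‖(u α : ℕ → ℂ) n‖ * pR n := (u α).2 _ (memP φ R)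
      have hbig : Summable fun n => ‖(u α : ℕ → ℂ) n‖ * p1 n / ((R : ℝ) + 1)
          + ‖(u α : ℕ → ℂ) n‖ * pR n / ((J : ℝ) + 1) :=
        (hsum1.div_const _).add (hsumR.div_const _)
      have hbig0 : ∀ n, (0 : ℝ) ≤ ‖(u α : ℕ → ℂ) n‖ * p1 n / ((R : ℝ) + 1)
          + ‖(u α : ℕ → ℂ) n‖ * pR n / ((J : ℝ) + 1) := by
        intro n
        have hp1nn : (0 : ℝ) ≤ p1 n := by simp [hp1def]
        have hpRnn : (0 : ℝ) ≤ pR n := by simp [hpRdef]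
        positivity
      have step1 : tailR (fun n => ‖(u α : ℕ → ℂ) n‖) N
          ≤ ∑' n, (‖(u α : ℕ → ℂ) n‖ * p1 n / ((R : ℝ) + 1)
            + ‖(u α : ℕ → ℂ) n‖ * pR n / ((J : ℝ) + 1)) := by
        refine le_trans (Summable.tsum_le_tsum (fun j => hpoint _ (N + j) (Nat.le_add_right N j))
          (summable_shift (knorm_summable φ (u α)) N) (summable_shift hbig N)) ?_
        exact tailR_le_tsum hbig0 hbig N
      have step2 : (∑' n, (‖(u α : ℕ → ℂ) n‖ * p1 n / ((R : ℝ) + 1)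
            + ‖(u α : ℕ → ℂ) n‖ * pR n / ((J : ℝ) + 1)))
          = (∑' n, ‖(u α : ℕ → ℂ) n‖ * p1 n) / ((R : ℝ) + 1)
            + (∑' n, ‖(u α : ℕ → ℂ) n‖ * pR n) / ((J : ℝ) + 1) := by
        rw [Summable.tsum_add (hsum1.div_const _) (hsumR.div_const _), tsum_div_const, tsum_div_const]
      have hb1 : (∑' n, ‖(u α : ℕ → ℂ) n‖ * p1 n) ≤ C1 := hC1 α
      have hbR : (∑' n, ‖(u α : ℕ → ℂ) n‖ * pR n) ≤ CR := hCR α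
      have e1 : (∑' n, ‖(u α : ℕ → ℂ) n‖ * p1 n) / ((R : ℝ) + 1) < 1 / 4 := by
        rw [div_lt_iff₀ (by positivity)]
        linarith
      have eR : (∑' n, ‖(u α : ℕ → ℂ) n‖ * pR n) / ((J : ℝ) + 1) < 1 / 4 := by
        rw [div_lt_iff₀ (by positivity)]
        linarith
      have := norm_tailC_le (knorm_summable φ (u α)) N
      rw [step2] at step1
      linarith
    -- the net converges at `e_N` for the seminorm `p^{(0)}`
    set p0 : ℕ → ℝ := fun n => (alphaMat 0 (φ.symm n) : ℝ) with hp0def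
    have conv := hcv (kotheE _ (alphaFamily_ge_one φ) N) _ (memP φ 0)
    have lower : ∀ α : ι, (1 : ℝ) / 2 ≤ kNorm p0
        ((kotheE _ (alphaFamily_ge_one φ) N - MK φ (kotheE _ (alphaFamily_ge_one φ) N) (u α) :
          kothe (alphaFamily φ) (alphaFamily_ge_one φ)) : ℕ → ℂ) := by
      intro α
      set d : ℕ → ℂ := ((kotheE _ (alphaFamily_ge_one φ) N
        - MK φ (kotheE _ (alphaFamily_ge_one φ) N) (u α) :
          kothe (alphaFamily φ) (alphaFamily_ge_one φ)) : ℕ → ℂ) with hd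
      have hdsum : Summable fun n => ‖d n‖ * p0 n :=
        (kotheE _ (alphaFamily_ge_one φ) N
          - MK φ (kotheE _ (alphaFamily_ge_one φ) N) (u α)).2 _ (memP φ 0)
      have hdN : d N = 1 - tailC ((u α : ℕ → ℂ)) N := by
        show (Pi.single N 1 : ℕ → ℂ) N - mulF (Pi.single N 1) (u α) N = _
        rw [mulF_single_left_self, Pi.single_eq_same]
      have h1 : ‖d N‖ * p0 N ≤ kNorm p0 d :=
        Summable.le_tsum hdsum N fun m _ =>
          mul_nonneg (norm_nonneg _) (zero_le_one.trans (alphaFamily_ge_one φ _ (memP φ 0) m))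
      have h2 : (1 : ℝ) / 2 ≤ ‖d N‖ := by
        rw [hdN]
        have ha := norm_sub_norm_le (1 : ℂ) (tailC ((u α : ℕ → ℂ)) N)
        have hb := tailbound α
        rw [norm_one] at ha
        linarith
      have hp0N : 1 ≤ p0 N := alphaFamily_ge_one φ _ (memP φ 0) N
      nlinarith [norm_nonneg (d N)]
    have : (1 : ℝ) / 2 ≤ 0 := ge_of_tendsto' conv lower
    linarith
end
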